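/- Let 𝒜 be a finite nonempty set, μ a translation invariant probability measure on 𝒜^(ℤ^d), (A, G) a tiling of ℤ^d with A partitioned into nonempty sets A_1, …, A_N, A_{<k} = ∪_{i<k} A_i, and G_n = {Σ g_i ê_i : |g_i| ≤ n}. Then for each k and each n, S( A_k + G_n | A_{<k} + G_n ) ≥ |G_n| · S( A_k | (A_k + G^−) ∪ (A_{<k} + G) ), where the right-hand conditional entropy (with infinite conditioning set Λ') is lim_m S(A_k | Λ' ∩ V_m). -/

import Mathlib

open MeasureTheory Real Filter Pointwise

/-- The lattice `ℤ^d`. -/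
abbrev LatZ (d : ℕ) := Fin d → ℤ

/-- Probability of the cylinder set determined by the configuration `x` on the finite set `Λ`. -/
noncomputable def cylProb {d : ℕ} {𝒜 : Type*} [MeasurableSpace 𝒜]
    (μ : Measure (LatZ d → 𝒜)) (Λ : Finset (LatZ d)) (x : Λ → 𝒜) : ℝ :=
  (μ {ω | ∀ v : Λ, ω v.1 = x v}).toReal

/-- The entropy `S(Λ)` of a finite set of sites `Λ` with respect to `μ`. -/
noncomputable def entS {d : ℕ} {𝒜 : Type*} [Fintype 𝒜] [MeasurableSpace 𝒜]
    (μ : Measure (LatZ d → 𝒜)) (Λ : Finset (LatZ d)) : ℝ :=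
  -∑ x : (Λ → 𝒜), cylProb μ Λ x * Real.log (cylProb μ Λ x)

/-- The conditional entropy `S(Λ | Λ')` (terms with zero probability vanish since
`Real.log 0 = 0` and `0 * log 0 = 0`). -/
noncomputable def condEnt {d : ℕ} {𝒜 : Type*} [Fintype 𝒜] [MeasurableSpace 𝒜]
    (μ : Measure (LatZ d → 𝒜)) (Λ Λ' : Finset (LatZ d)) : ℝ :=
  -∑ x : ((Λ ∪ Λ' : Finset (LatZ d)) → 𝒜),
      cylProb μ (Λ ∪ Λ') x *
        Real.log (cylProb μ (Λ ∪ Λ') x /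
          cylProb μ Λ' (fun v => x ⟨v.1, Finset.mem_union_right Λ v.2⟩))

/-- The shift map `σ_v`, `(σ_v x)(u) = x(u + v)`. -/
def shiftMap {d : ℕ} {𝒜 : Type*} (v : LatZ d) (ω : LatZ d → 𝒜) : LatZ d → 𝒜 :=
  fun u => ω (u + v)

/-- `μ` is translation invariant if it is preserved by every shift `σ_v`. -/
def TransInv {d : ℕ} {𝒜 : Type*} [MeasurableSpace 𝒜] (μ : Measure (LatZ d → 𝒜)) : Prop :=
  ∀ v : LatZ d, μ.map (shiftMap v) = μ

/-- The box `V_n = {v ∈ ℤ^d : |v_i| ≤ n ∀ i}` (also used as coordinate box `G_n`). -/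
noncomputable def Vbox (d n : ℕ) : Finset (LatZ d) :=
  Fintype.piFinset fun _ => Finset.Icc (-(n : ℤ)) (n : ℤ)

open Classical in
/-- The finite set `Λ' ∩ V_n` for a (possibly infinite) `Λ' ⊆ ℤ^d`. -/
noncomputable def interBox (d : ℕ) (Λ' : Set (LatZ d)) (n : ℕ) : Finset (LatZ d) :=
  (Vbox d n).filter (· ∈ Λ')

/-- The lattice point `Σ_i c_i ê_i` with coordinates `c` in the basis `e`. -/
def latt {d : ℕ} (e : Fin d → LatZ d) (c : Fin d → ℤ) : LatZ d :=
  ∑ i, c i • e i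

/-- Lexicographic comparison of coordinate vectors. -/
def lexLt {d : ℕ} (c c' : Fin d → ℤ) : Prop :=
  ∃ i, c i < c' i ∧ ∀ j, j < i → c j = c' j

/-- The subgroup `G` generated by `e`, as a set. -/
def Gfull {d : ℕ} (e : Fin d → LatZ d) : Set (LatZ d) :=
  Set.range (latt e)

/-- `G^- = {g ∈ G : g < 0}` in the lexicographic order on `G`. -/
def Gneg {d : ℕ} (e : Fin d → LatZ d) : Set (LatZ d) :=
  {g | ∃ c, lexLt c 0 ∧ g = latt e c}

/-- The finite subset `G_n = {Σ g_i ê_i : |g_i| ≤ n}` of `G`. -/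
noncomputable def GboxF {d : ℕ} (e : Fin d → LatZ d) (n : ℕ) : Finset (LatZ d) :=
  (Vbox d n).image (latt e)

/-- A tiling `(A, G)` of `ℤ^d`, with `G` the subgroup generated by the
`ℤ`-linearly independent family `e`. -/
structure IsTiling {d : ℕ} (A : Finset (LatZ d)) (e : Fin d → LatZ d) : Prop where
  zero_mem : (0 : LatZ d) ∈ A
  indep : LinearIndependent ℤ e
  cover : ∀ v : LatZ d, ∃ a ∈ A, ∃ c : Fin d → ℤ, v = a + latt e c
  disj : ∀ c c' : Fin d → ℤ, latt e c ≠ latt e c' →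
    Disjoint (A.image (· + latt e c)) (A.image (· + latt e c'))

/-- The unit cube `U_d`. -/
noncomputable def Ud (d : ℕ) : Finset (LatZ d) :=
  Fintype.piFinset fun _ => Finset.Icc (-1 : ℤ) 1

open Classical in
/-- The boundary `∂Λ = Λ ∩ (U_d + Λ^C)`. -/
noncomputable def bdry {d : ℕ} (Λ : Finset (LatZ d)) : Finset (LatZ d) :=
  Λ.filter (fun v => v ∈ (↑(Ud d) : Set (LatZ d)) + (↑Λ : Set (LatZ d))ᶜ)


/-!
Enumerate `G_n` in increasing lexicographic order. The chain rule splits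
`S(A_k + G_n | A_{<k} + G_n)` into `|G_n|` terms
`S(A_k + g | (A_k + {g' ∈ G_n : g' < g}) ∪ (A_{<k} + G_n))`. Translating by `-g`, which does not
change entropies since `μ` is shift invariant, turns each conditioning set into a finite subset of
`Λ' = (A_k + G^-) ∪ (A_{<k} + G)`. Conditioning on more sites can only lower the entropy (strong
subadditivity), so every term is at least `inf_m S(A_k | Λ' ∩ V_m)`, and this infimum is the limit
because the sequence decreases.
-/

lemma sum_mul_log_le_sum_mul_log_self {ι : Type*} [Fintype ι] {p r : ι → ℝ} (hp : ∀ i, 0 ≤ p i)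
    (hr : ∀ i, 0 ≤ r i) (hpr : ∀ i, p i ≠ 0 → r i ≠ 0) (hsum : ∑ i, r i ≤ ∑ i, p i) :
    ∑ i, p i * log (r i) ≤ ∑ i, p i * log (p i) := by
  have key : ∀ i, p i * log (r i) - p i * log (p i) ≤ r i - p i := by
    intro i
    rcases (hp i).eq_or_lt with h0 | h0
    · simp [← h0, hr i]
    have hri : 0 < r i := (hr i).lt_of_ne (hpr i h0.ne').symm
    calc p i * log (r i) - p i * log (p i) = p i * log (r i / p i) := by
          rw [log_div hri.ne' h0.ne']; ring
      _ ≤ p i * (r i / p i - 1) := by gcongr; exact log_le_sub_one_of_pos (div_pos hri h0)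
      _ = r i - p i := by rw [mul_sub, mul_div_cancel₀ _ h0.ne', mul_one]
  have := Finset.sum_le_sum fun i (_ : i ∈ Finset.univ) => key i
  simp only [Finset.sum_sub_distrib] at this
  linarith

section Lattice

variable {d : ℕ}

open Finset

lemma latt_eq_linearCombination (e : Fin d → LatZ d) : latt e = Fintype.linearCombination ℤ e :=
  funext fun c => (Fintype.linearCombination_apply ℤ e c).symm

lemma latt_sub (e : Fin d → LatZ d) (c c' : Fin d → ℤ) :
    latt e (c - c') = latt e c - latt e c' := by
  rw [latt_eq_linearCombination, map_sub]

lemma card_GboxF {e : Fin d → LatZ d} (he : LinearIndependent ℤ e) (n : ℕ) :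
    (GboxF e n).card = (Vbox d n).card := by
  rw [GboxF, latt_eq_linearCombination,
    card_image_of_injective _ he.fintypeLinearCombination_injective]

lemma latt_sub_mem_Gneg (e : Fin d → LatZ d) {c c' : Fin d → ℤ} (h : toLex c < toLex c') :
    latt e c - latt e c' ∈ Gneg e := by
  obtain ⟨i, hj, hi⟩ := h
  refine ⟨c - c', ⟨i, by simpa using hi, fun j hji => by simpa [sub_eq_zero] using hj j hji⟩, ?_⟩
  rw [latt_sub]

lemma latt_sub_mem_Gfull (e : Fin d → LatZ d) (c c' : Fin d → ℤ) :
    latt e c - latt e c' ∈ Gfull e :=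
  ⟨c - c', latt_sub e c c'⟩

lemma mem_Vbox {n : ℕ} {v : LatZ d} : v ∈ Vbox d n ↔ ∀ i, |v i| ≤ n := by
  simp [Vbox, abs_le]

lemma exists_subset_interBox {S : Set (LatZ d)} {W : Finset (LatZ d)} (hW : ↑W ⊆ S) :
    ∃ m, W ⊆ interBox d S m := by
  have : ∀ᶠ m in atTop, ∀ v ∈ W, v ∈ Vbox d m := by
    refine (eventually_all_finset W).2 fun v _ => ?_
    simp only [mem_Vbox]
    refine eventually_all.2 fun i => (eventually_ge_atTop (v i).natAbs).mono fun m hm => ?_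
    rw [Int.abs_eq_natAbs]
    exact_mod_cast hm
  obtain ⟨m, hm⟩ := this.exists
  exact ⟨m, fun v hv => by classical simpa [interBox, hm v hv] using hW hv⟩

lemma interBox_mono (S : Set (LatZ d)) : Monotone (interBox d S) := by
  intro m m' h v
  classical
  simp only [interBox, mem_filter, mem_Vbox]
  exact fun ⟨hv, hS⟩ => ⟨fun i => (hv i).trans (by exact_mod_cast h), hS⟩

lemma biUnion_image_add_latt (e : Fin d → LatZ d) (Λ : Finset (LatZ d)) (n : ℕ) :
    ((Vbox d n).map toLex.toEmbedding).biUnion (fun c => Λ.image (· + latt e (ofLex c)))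
      = Λ + GboxF e n := by
  ext v
  simp only [GboxF, mem_biUnion, Finset.mem_map, mem_image, Finset.mem_add]
  constructor
  · rintro ⟨_, ⟨c, hc, rfl⟩, p, hp, rfl⟩
    exact ⟨p, hp, _, ⟨c, hc, rfl⟩, rfl⟩
  · rintro ⟨p, hp, _, ⟨c, hc, rfl⟩, rfl⟩
    exact ⟨_, ⟨c, hc, rfl⟩, p, hp, rfl⟩

lemma sub_latt_mem_of_mem_biUnion_lt (e : Fin d → LatZ d) (Λ B : Finset (LatZ d)) (n : ℕ)
    {t : Finset (Lex (Fin d → ℤ))} {c : Lex (Fin d → ℤ)} (ht : ∀ b ∈ t, b < c) {w : LatZ d}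
    (hw : w ∈ t.biUnion (fun c => Λ.image (· + latt e (ofLex c))) ∪ (B + GboxF e n)) :
    w - latt e (ofLex c) ∈ (↑Λ + Gneg e) ∪ (↑B + Gfull e) := by
  rcases mem_union.1 hw with hw | hw
  · obtain ⟨b, hb, hw⟩ := mem_biUnion.1 hw
    obtain ⟨p, hp, rfl⟩ := mem_image.1 hw
    rw [add_sub_assoc]
    exact Or.inl (Set.add_mem_add hp (latt_sub_mem_Gneg e (ht b hb)))
  · obtain ⟨q, hq, _, hg, rfl⟩ := Finset.mem_add.1 hw
    obtain ⟨c', -, rfl⟩ := mem_image.1 hg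
    rw [add_sub_assoc]
    exact Or.inr (Set.add_mem_add hq (latt_sub_mem_Gfull e c' _))

end Lattice


section Entropy

variable {d : ℕ} {𝒜 : Type*}

open Finset

/-- `Finset.restrict₂` with a constant codomain, which unification cannot infer. -/
def restrictConf {Λ' Λ : Finset (LatZ d)} (h : Λ' ⊆ Λ) (x : Λ → 𝒜) : Λ' → 𝒜 :=
  fun v => x ⟨v, h v.2⟩

@[simp]
lemma restrictConf_apply {Λ' Λ : Finset (LatZ d)} (h : Λ' ⊆ Λ) (x : Λ → 𝒜) (v : Λ') :
    restrictConf h x v = x ⟨v, h v.2⟩ :=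
  rfl

@[simp]
lemma restrictConf_restrictConf {Λ'' Λ' Λ : Finset (LatZ d)} (h' : Λ'' ⊆ Λ') (h : Λ' ⊆ Λ)
    (x : Λ → 𝒜) : restrictConf h' (restrictConf h x) = restrictConf (h'.trans h) x :=
  rfl

variable [MeasurableSpace 𝒜] {μ : Measure (LatZ d → 𝒜)}

lemma measurable_restrictConf {Λ' Λ : Finset (LatZ d)} (h : Λ' ⊆ Λ) :
    Measurable (restrictConf (𝒜 := 𝒜) h) :=
  measurable_pi_lambda _ fun _ => measurable_pi_apply _

lemma cylProb_nonneg (Λ : Finset (LatZ d)) (x : Λ → 𝒜) : 0 ≤ cylProb μ Λ x :=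
  ENNReal.toReal_nonneg

variable [MeasurableSingletonClass 𝒜]

lemma cylProb_eq_map_real (Λ : Finset (LatZ d)) (x : Λ → 𝒜) :
    cylProb μ Λ x = (μ.map Λ.restrict).real {x} := by
  rw [map_measureReal_apply (measurable_restrict Λ) (measurableSet_singleton x), measureReal_def,
    cylProb]
  congr 2 with ω
  simp [funext_iff]

lemma cylProb_image_add (hμ : TransInv μ) (g : LatZ d) (Λ : Finset (LatZ d))
    (x : Λ.image (· + g) → 𝒜) :
    cylProb μ (Λ.image (· + g)) x = cylProb μ Λ (fun v => x ⟨v + g, mem_image_of_mem _ v.2⟩) := by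
  have hmeas : Measurable (shiftMap (𝒜 := 𝒜) g) :=
    measurable_pi_lambda _ fun u => measurable_pi_apply (u + g)
  rw [cylProb_eq_map_real, cylProb_eq_map_real]
  conv_rhs => rw [← hμ g, Measure.map_map (measurable_restrict _) hmeas]
  rw [map_measureReal_apply (measurable_restrict _) (measurableSet_singleton _),
    map_measureReal_apply ((measurable_restrict _).comp hmeas) (measurableSet_singleton _)]
  congr 1 with ω
  refine ⟨fun h => funext fun v => congrFun h ⟨v + g, _⟩, fun h => funext fun ⟨w, hw⟩ => ?_⟩
  obtain ⟨a, ha, rfl⟩ := mem_image.1 hw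
  exact congrFun h ⟨a, ha⟩

variable [Fintype 𝒜]

lemma entS_image_add (hμ : TransInv μ) (g : LatZ d) (Λ : Finset (LatZ d)) :
    entS μ (Λ.image (· + g)) = entS μ Λ := by
  let σ : Λ ≃ Λ.image (· + g) := (Equiv.addRight g).subtypeEquiv fun v => by simp
  rw [entS, entS]
  congr 1
  exact Fintype.sum_equiv (σ.arrowCongr (Equiv.refl 𝒜)).symm _ _ fun x => by
    rw [cylProb_image_add hμ]
    rfl

variable [IsProbabilityMeasure μ]

lemma sum_cylProb (Λ : Finset (LatZ d)) : ∑ x : Λ → 𝒜, cylProb μ Λ x = 1 := by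
  have := Measure.isProbabilityMeasure_map (μ := μ) (measurable_restrict Λ).aemeasurable
  simp [cylProb_eq_map_real]

open scoped Classical in
lemma sum_cylProb_fiber {Λ' Λ : Finset (LatZ d)} (h : Λ' ⊆ Λ) (y : Λ' → 𝒜) :
    ∑ x with restrictConf h x = y, cylProb μ Λ x = cylProb μ Λ' y := by
  simp_rw [cylProb_eq_map_real, sum_measureReal_singleton]
  rw [show Λ'.restrict = restrictConf h ∘ Λ.restrict from rfl,
    ← Measure.map_map (measurable_restrictConf h) (measurable_restrict Λ),
    map_measureReal_apply (measurable_restrictConf h) (measurableSet_singleton y)]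
  congr 2 with x
  simp [funext_iff]

lemma cylProb_le_restrictConf {Λ' Λ : Finset (LatZ d)} (h : Λ' ⊆ Λ) (x : Λ → 𝒜) :
    cylProb μ Λ x ≤ cylProb μ Λ' (restrictConf h x) := by
  rw [← sum_cylProb_fiber h]
  exact single_le_sum (fun x' _ => cylProb_nonneg Λ x') (by simp)

lemma cylProb_restrictConf_pos {Λ' Λ : Finset (LatZ d)} (h : Λ' ⊆ Λ) {x : Λ → 𝒜}
    (hx : 0 < cylProb μ Λ x) : 0 < cylProb μ Λ' (restrictConf h x) :=
  hx.trans_le (cylProb_le_restrictConf h x)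

lemma sum_cylProb_mul_comp_restrictConf {Λ' Λ : Finset (LatZ d)} (h : Λ' ⊆ Λ)
    (F : (Λ' → 𝒜) → ℝ) :
    ∑ x : Λ → 𝒜, cylProb μ Λ x * F (restrictConf h x) = ∑ y : Λ' → 𝒜, cylProb μ Λ' y * F y := by
  classical
  rw [← sum_fiberwise univ (restrictConf h)]
  refine sum_congr rfl fun y _ => ?_
  rw [← sum_cylProb_fiber h y, sum_mul]
  exact sum_congr rfl fun x hx => by rw [(mem_filter.1 hx).2]

lemma sum_cylProb_mul_log_restrictConf {Λ' Λ : Finset (LatZ d)} (h : Λ' ⊆ Λ) :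
    ∑ x : Λ → 𝒜, cylProb μ Λ x * log (cylProb μ Λ' (restrictConf h x)) = -entS μ Λ' := by
  rw [sum_cylProb_mul_comp_restrictConf h (fun y => log (cylProb μ Λ' y)), entS, neg_neg]

open scoped Classical in
/-- Extending `u` to `B ∪ C` amounts to extending `u|_{B ∩ C}` to `C`. -/
lemma sum_cylProb_union_fiber (B C : Finset (LatZ d)) (u : B → 𝒜) :
    ∑ x with restrictConf subset_union_left x = u, cylProb μ C (restrictConf subset_union_right x)
      = cylProb μ (B ∩ C) (restrictConf inter_subset_left u) := by
  rw [← sum_cylProb_fiber inter_subset_right]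
  refine sum_nbij (restrictConf subset_union_right) ?_ ?_ ?_ (fun _ _ => rfl)
  · intro x hx
    simp only [mem_filter, mem_univ, true_and] at hx ⊢
    rw [← hx]
    ext
    simp
  · intro x hx x' hx' hxx'
    simp only [coe_filter, mem_univ, true_and, Set.mem_ofPred_eq] at hx hx'
    funext ⟨v, hv⟩
    rcases mem_union.1 hv with hB | hC
    · simpa using congrFun (hx.trans hx'.symm) ⟨v, hB⟩
    · simpa using congrFun hxx' ⟨v, hC⟩
  · intro z hz
    simp only [coe_filter, mem_univ, true_and, Set.mem_ofPred_eq] at hz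
    refine ⟨fun v => if hB : v.1 ∈ B then u ⟨v.1, hB⟩ else
      z ⟨v.1, (mem_union.1 v.2).resolve_left hB⟩, ?_, ?_⟩
    · simp only [coe_filter, mem_univ, true_and, Set.mem_ofPred_eq]
      funext v
      simp [v.2]
    · funext v
      by_cases hB : v.1 ∈ B
      · simpa [hB] using (congrFun hz ⟨v.1, mem_inter.2 ⟨hB, v.2⟩⟩).symm
      · simp [hB]

lemma sum_cylProb_union_mul (B C : Finset (LatZ d)) (F : (B → 𝒜) → ℝ) :
    ∑ x : (B ∪ C : Finset (LatZ d)) → 𝒜,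
        cylProb μ C (restrictConf subset_union_right x) * F (restrictConf subset_union_left x)
      = ∑ u : B → 𝒜, cylProb μ (B ∩ C) (restrictConf inter_subset_left u) * F u := by
  classical
  rw [← sum_fiberwise univ (restrictConf subset_union_left)]
  refine sum_congr rfl fun u _ => ?_
  rw [← sum_cylProb_union_fiber B C u, sum_mul]
  exact sum_congr rfl fun x hx => by rw [(mem_filter.1 hx).2]

lemma condEnt_eq_sub (Λ Λ' : Finset (LatZ d)) :
    condEnt μ Λ Λ' = entS μ (Λ ∪ Λ') - entS μ Λ' := by
  have hsplit : ∀ x : (Λ ∪ Λ' : Finset (LatZ d)) → 𝒜,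
      cylProb μ (Λ ∪ Λ') x *
          log (cylProb μ (Λ ∪ Λ') x / cylProb μ Λ' (restrictConf subset_union_right x))
        = cylProb μ (Λ ∪ Λ') x * log (cylProb μ (Λ ∪ Λ') x)
          - cylProb μ (Λ ∪ Λ') x * log (cylProb μ Λ' (restrictConf subset_union_right x)) := by
    intro x
    rcases (cylProb_nonneg (μ := μ) _ x).eq_or_lt with h0 | h0
    · simp [← h0]
    rw [log_div h0.ne' (cylProb_restrictConf_pos _ h0).ne']
    ring
  calc condEnt μ Λ Λ' = -∑ x : (Λ ∪ Λ' : Finset (LatZ d)) → 𝒜,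
        (cylProb μ (Λ ∪ Λ') x * log (cylProb μ (Λ ∪ Λ') x)
          - cylProb μ (Λ ∪ Λ') x * log (cylProb μ Λ' (restrictConf subset_union_right x))) :=
        congrArg _ (sum_congr rfl fun x _ => hsplit x)
    _ = entS μ (Λ ∪ Λ') - entS μ Λ' := by
        rw [sum_sub_distrib, sum_cylProb_mul_log_restrictConf, entS, entS]
        ring

lemma condEnt_nonneg (Λ Λ' : Finset (LatZ d)) : 0 ≤ condEnt μ Λ Λ' := by
  rw [condEnt, neg_nonneg]
  refine sum_nonpos fun x _ => ?_
  rcases (cylProb_nonneg (μ := μ) _ x).eq_or_lt with h0 | h0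
  · simp [← h0]
  refine mul_nonpos_of_nonneg_of_nonpos h0.le
    (log_nonpos (div_nonneg h0.le (cylProb_nonneg _ _)) ?_)
  exact (div_le_one (cylProb_restrictConf_pos subset_union_right h0)).2
    (cylProb_le_restrictConf _ x)

lemma entS_mono {P Q : Finset (LatZ d)} (h : P ⊆ Q) : entS μ P ≤ entS μ Q := by
  have := condEnt_nonneg (μ := μ) Q P
  rw [condEnt_eq_sub, union_eq_left.2 h] at this
  linarith

/-- Strong subadditivity, from Gibbs' inequality against the weights
`p_C(x_C) p_B(x_B) / p_{B ∩ C}(x_{B ∩ C})`, which sum to at most one. -/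
lemma entS_union_add_entS_inter_le (B C : Finset (LatZ d)) :
    entS μ (B ∪ C) + entS μ (B ∩ C) ≤ entS μ B + entS μ C := by
  have hB : B ⊆ B ∪ C := subset_union_left
  have hC : C ⊆ B ∪ C := subset_union_right
  have hI : B ∩ C ⊆ B ∪ C := inter_subset_left.trans hB
  let F (u : B → 𝒜) : ℝ := cylProb μ B u / cylProb μ (B ∩ C) (restrictConf inter_subset_left u)
  let r (x : (B ∪ C : Finset (LatZ d)) → 𝒜) : ℝ :=
    cylProb μ C (restrictConf hC x) * F (restrictConf hB x)
  have hr_sum : ∑ x, r x ≤ ∑ x, cylProb μ (B ∪ C) x := by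
    calc ∑ x, r x = ∑ u, cylProb μ (B ∩ C) (restrictConf inter_subset_left u) * F u :=
          sum_cylProb_union_mul B C F
      _ ≤ ∑ u, cylProb μ B u := sum_le_sum fun u _ => by
          rcases eq_or_ne (cylProb μ (B ∩ C) (restrictConf inter_subset_left u)) 0 with h0 | h0
          · simp [F, h0, cylProb_nonneg]
          · rw [mul_div_cancel₀ _ h0]
      _ = ∑ x, cylProb μ (B ∪ C) x := by rw [sum_cylProb, sum_cylProb]
  have hr_pos : ∀ x, cylProb μ (B ∪ C) x ≠ 0 → r x ≠ 0 := fun x hx => by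
    have h0 := (cylProb_nonneg (μ := μ) _ x).lt_of_ne' hx
    simp only [r, F, restrictConf_restrictConf]
    exact (mul_pos (cylProb_restrictConf_pos hC h0) (div_pos (cylProb_restrictConf_pos hB h0)
      (cylProb_restrictConf_pos hI h0))).ne'
  have hlog : ∀ x, cylProb μ (B ∪ C) x * log (r x)
      = cylProb μ (B ∪ C) x * log (cylProb μ C (restrictConf hC x))
        + cylProb μ (B ∪ C) x * log (cylProb μ B (restrictConf hB x))
        - cylProb μ (B ∪ C) x * log (cylProb μ (B ∩ C) (restrictConf hI x)) := fun x => by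
    rcases (cylProb_nonneg (μ := μ) _ x).eq_or_lt with h0 | h0
    · simp [← h0]
    simp only [r, F, restrictConf_restrictConf]
    rw [log_mul (cylProb_restrictConf_pos hC h0).ne'
      (div_pos (cylProb_restrictConf_pos hB h0) (cylProb_restrictConf_pos hI h0)).ne',
      log_div (cylProb_restrictConf_pos hB h0).ne' (cylProb_restrictConf_pos hI h0).ne']
    ring
  have hgibbs : ∑ x, cylProb μ (B ∪ C) x * log (r x)
      ≤ ∑ x, cylProb μ (B ∪ C) x * log (cylProb μ (B ∪ C) x) :=
    sum_mul_log_le_sum_mul_log_self (cylProb_nonneg _) (fun x => mul_nonneg (cylProb_nonneg _ _)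
      (div_nonneg (cylProb_nonneg _ _) (cylProb_nonneg _ _))) hr_pos hr_sum
  rw [sum_congr rfl fun x _ => hlog x, sum_sub_distrib, sum_add_distrib,
    sum_cylProb_mul_log_restrictConf, sum_cylProb_mul_log_restrictConf,
    sum_cylProb_mul_log_restrictConf, ← neg_neg (∑ x, _ * log _), ← entS] at hgibbs
  linarith

lemma condEnt_anti_right (Λ : Finset (LatZ d)) {P Q : Finset (LatZ d)} (h : P ⊆ Q) :
    condEnt μ Λ Q ≤ condEnt μ Λ P := by
  have hsub := entS_union_add_entS_inter_le (μ := μ) (Λ ∪ P) Q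
  have hP := entS_mono (μ := μ) (subset_inter (subset_union_right (s₁ := Λ)) h)
  rw [union_assoc, union_eq_right.2 h] at hsub
  rw [condEnt_eq_sub, condEnt_eq_sub]
  linarith

lemma condEnt_union_left (Λ₁ Λ₂ Λ' : Finset (LatZ d)) :
    condEnt μ (Λ₁ ∪ Λ₂) Λ' = condEnt μ Λ₁ (Λ₂ ∪ Λ') + condEnt μ Λ₂ Λ' := by
  simp only [condEnt_eq_sub, union_assoc]
  ring

lemma condEnt_empty_left (Λ' : Finset (LatZ d)) : condEnt μ ∅ Λ' = 0 := by
  rw [condEnt_eq_sub, empty_union, sub_self]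

lemma condEnt_image_add (hμ : TransInv μ) (g : LatZ d) (Λ Λ' : Finset (LatZ d)) :
    condEnt μ (Λ.image (· + g)) (Λ'.image (· + g)) = condEnt μ Λ Λ' := by
  rw [condEnt_eq_sub, condEnt_eq_sub, ← image_union, entS_image_add hμ, entS_image_add hμ]

lemma exists_tendsto_condEnt_interBox (Λ : Finset (LatZ d)) (S : Set (LatZ d)) :
    ∃ L, Tendsto (fun m => condEnt μ Λ (interBox d S m)) atTop (nhds L) ∧
      ∀ W : Finset (LatZ d), ↑W ⊆ S → L ≤ condEnt μ Λ W := by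
  have hanti : Antitone fun m => condEnt μ Λ (interBox d S m) :=
    fun m m' h => condEnt_anti_right Λ (interBox_mono S h)
  have hbdd : BddBelow (Set.range fun m => condEnt μ Λ (interBox d S m)) :=
    ⟨0, Set.forall_mem_range.2 fun m => condEnt_nonneg _ _⟩
  refine ⟨_, tendsto_atTop_ciInf hanti hbdd, fun W hW => ?_⟩
  obtain ⟨m, hm⟩ := exists_subset_interBox hW
  exact (ciInf_le hbdd m).trans (condEnt_anti_right Λ hm)

lemma card_mul_le_condEnt_biUnion {α : Type*} [LinearOrder α] (F : α → Finset (LatZ d))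
    (Λ' : Finset (LatZ d)) {L : ℝ} (s : Finset α)
    (h : ∀ a ∈ s, L ≤ condEnt μ (F a) ((s.filter (· < a)).biUnion F ∪ Λ')) :
    s.card * L ≤ condEnt μ (s.biUnion F) Λ' := by
  induction s using Finset.induction_on_max with
  | empty => simp [condEnt_empty_left]
  | insert a s hlt ih =>
    have ha : a ∉ s := fun ha => lt_irrefl a (hlt a ha)
    have hfirst := h a (mem_insert_self a s)
    rw [filter_insert, if_neg (lt_irrefl a), filter_true_of_mem hlt] at hfirst
    have hrest := ih fun b hb => by
      simpa [filter_insert, (hlt b hb).not_gt] using h b (mem_insert_of_mem hb)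
    rw [biUnion_insert, condEnt_union_left, card_insert_of_notMem ha]
    push_cast
    linarith

lemma le_condEnt_image_add (hμ : TransInv μ) {Λ : Finset (LatZ d)} {S : Set (LatZ d)} {L : ℝ}
    (hL : ∀ W : Finset (LatZ d), ↑W ⊆ S → L ≤ condEnt μ Λ W) (g : LatZ d) {W : Finset (LatZ d)}
    (hW : ∀ w ∈ W, w - g ∈ S) : L ≤ condEnt μ (Λ.image (· + g)) W := by
  have hshift : (W.image (· - g)).image (· + g) = W := by
    rw [image_image]
    simp [Function.comp_def]
  rw [← hshift, condEnt_image_add hμ]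
  refine hL _ fun v hv => ?_
  obtain ⟨w, hw, rfl⟩ := mem_image.1 hv
  exact hW w hw

end Entropy

theorem block_condEnt_lower_bound_general {d : ℕ} {𝒜 : Type*} [Fintype 𝒜]
    [MeasurableSpace 𝒜] [MeasurableSingletonClass 𝒜]
    (μ : Measure (LatZ d → 𝒜)) [IsProbabilityMeasure μ] (hinv : TransInv μ)
    (A : Finset (LatZ d)) (e : Fin d → LatZ d) (htile : IsTiling A e)
    (N : ℕ) (parts : Fin N → Finset (LatZ d)) (n : ℕ) (k : Fin N) :
    ∃ L : ℝ,
      Filter.Tendsto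
        (fun m => condEnt μ (parts k)
          (interBox d
            (((↑(parts k) : Set (LatZ d)) + Gneg e) ∪
              ((↑((Finset.Iio k).biUnion parts) : Set (LatZ d)) + Gfull e)) m))
        Filter.atTop (nhds L) ∧
      ((GboxF e n).card : ℝ) * L ≤
        condEnt μ (parts k + GboxF e n) ((Finset.Iio k).biUnion parts + GboxF e n) := by
  obtain ⟨L, hlim, hL⟩ := exists_tendsto_condEnt_interBox (μ := μ) (parts k)
    ((↑(parts k) + Gneg e) ∪ (↑((Finset.Iio k).biUnion parts) + Gfull e))
  refine ⟨L, hlim, ?_⟩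
  have hcard : ((Vbox d n).map toLex.toEmbedding).card = (GboxF e n).card := by
    rw [Finset.card_map, card_GboxF htile.indep]
  rw [← biUnion_image_add_latt, ← hcard]
  exact card_mul_le_condEnt_biUnion _ _ _ fun c _ => le_condEnt_image_add hinv hL _ fun _ hw =>
    sub_latt_mem_of_mem_biUnion_lt e _ _ n (fun _ hb => by exact (Finset.mem_filter.1 hb).2) hw

/-- lower bound. For a translation invariant `μ`, a tiling `(A, G)` and a
partition of `A`, for each `k` and `n`:
`S(A_k + G_n | A_{<k} + G_n) ≥ |G_n| · S(A_k | (A_k + G^-) ∪ (A_{<k} + G))`,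
where the right-hand conditional entropy (infinite conditioning set `Λ'`) is the limit
`lim_m S(A_k | Λ' ∩ V_m)`. -/
theorem block_condEnt_lower_bound {d : ℕ} {𝒜 : Type*} [Fintype 𝒜] [Nonempty 𝒜]
    [MeasurableSpace 𝒜] [MeasurableSingletonClass 𝒜]
    (μ : Measure (LatZ d → 𝒜)) [IsProbabilityMeasure μ] (hinv : TransInv μ)
    (A : Finset (LatZ d)) (e : Fin d → LatZ d) (htile : IsTiling A e)
    (N : ℕ) (parts : Fin N → Finset (LatZ d))
    (hne : ∀ k, (parts k).Nonempty)
    (hdisj : ∀ k l, k ≠ l → Disjoint (parts k) (parts l))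
    (hunion : Finset.univ.biUnion parts = A) (n : ℕ) (k : Fin N) :
    ∃ L : ℝ,
      Filter.Tendsto
        (fun m => condEnt μ (parts k)
          (interBox d
            (((↑(parts k) : Set (LatZ d)) + Gneg e) ∪
              ((↑((Finset.Iio k).biUnion parts) : Set (LatZ d)) + Gfull e)) m))
        Filter.atTop (nhds L) ∧
      ((GboxF e n).card : ℝ) * L ≤
        condEnt μ (parts k + GboxF e n) ((Finset.Iio k).biUnion parts + GboxF e n) :=
  block_condEnt_lower_bound_general μ hinv A e htile N parts n k
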